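/- (Fisher consistency of residual weighted learning, integrated form of Theorem 1.) Let K ≥ 1 be an integer, (X, Σ_X, μ) a measure space, and W : X × {−1,1}^K → ℝ such that x ↦ W(x,a) is measurable and integrable for each a ∈ {−1,1}^K. Let W̄(x) = 2^{−K} Σ_{a ∈ {−1,1}^K} W(x,a), and assume that for μ-a.e. x the function a ↦ W(x,a) attains its maximum at a unique point a₀(x). Then for every measurable f : X → ℝ^K with x ↦ Σ_a (W(x,a) − W̄(x)) ψ(a ⊙ f(x)) integrable, ∫ Σ_{a} (W(x,a) − W̄(x)) ψ(a ⊙ f(x)) dμ(x) ≥ ∫ (Σ_{a} (W(x,a) − W̄(x)) − (W(x, a₀(x)) − W̄(x))) dμ(x), with equality if and only if for μ-a.e. x, a₀(x)_k f(x)_k ≥ 1 for all k = 1, …, K; in particular any minimizer f of the residual-weighted ψ-risk satisfies sign(f(x)) = a₀(x) μ-a.e. -/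

import Mathlib

/-- `Tgen s z = max (s - z 1, ..., s - z K, 0)`, the function `T_s` from the paper. -/
noncomputable def Tgen {K : ℕ} (s : ℝ) (z : Fin K → ℝ) : ℝ :=
  Finset.fold (· ⊔ ·) 0 (fun k => s - z k) Finset.univ

/-- The generalized ψ-loss: `ψ z = T₁ z - T₀ z`. -/
noncomputable def psiLoss {K : ℕ} (z : Fin K → ℝ) : ℝ :=
  Tgen 1 z - Tgen 0 z

open scoped Classical in
/-- The set of sign vectors `{-1, 1}^K`, as a finset of `Fin K → ℝ`. -/
noncomputable def signVecs (K : ℕ) : Finset (Fin K → ℝ) :=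
  Finset.image (fun (b : Fin K → Bool) (k : Fin K) => if b k then (1 : ℝ) else -1)
    Finset.univ

lemma mem_signVecs {K : ℕ} (a : Fin K → ℝ) :
    a ∈ signVecs K ↔ ∀ k, a k = 1 ∨ a k = -1 := by
  classical
  unfold signVecs
  constructor
  · intro h k
    rw [Finset.mem_image] at h
    obtain ⟨b, -, rfl⟩ := h
    by_cases hb : b k <;> simp [hb]
  · intro h
    rw [Finset.mem_image]
    refine ⟨fun k => decide (a k = 1), Finset.mem_univ _, ?_⟩
    funext k
    rcases h k with h1 | h1 <;> norm_num [h1]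

lemma signVecs_nonempty (K : ℕ) : (signVecs K).Nonempty :=
  ⟨fun _ => 1, (mem_signVecs _).mpr fun _ => Or.inl rfl⟩

/-!
Write `c a = W x a - W̄ x`, so that `∑ₐ c a = 0` and the Bayes value is `-c a₀`. Then
`∑ₐ c a ψ(a ⊙ z) = -∑ₐ c a tₐ` with `tₐ = 1 - ψ(a ⊙ z) ∈ [0, 1]`. Since `ψ(w) = 1` as soon as
some `w k ≤ 0`, and two distinct sign vectors disagree in some coordinate, at most one `tₐ` is
nonzero, so `t` is a sub-probability vector. Hence `∑ₐ c a tₐ ≤ c a₀`, with equality iff all the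
weight sits on the strict maximiser `a₀` (note `c a₀ > 0`, as `K ≥ 1`), i.e. iff `ψ(a₀ ⊙ z) = 0`,
i.e. iff `a₀ k z k ≥ 1` for all `k`. Integrating this pointwise statement gives the theorem;
`f = a₀` attains the bound, so a minimiser attains it too, which forces `a₀ k f k ≥ 1` and hence
`sign f = a₀` a.e.
-/

open Finset MeasureTheory

namespace Finset

variable {ι : Type*} {s : Finset ι} {c t : ι → ℝ} {i₀ : ι}

theorem pos_of_sum_eq_zero_of_forall_lt (hsum : ∑ i ∈ s, c i = 0)
    (hne : ∃ j ∈ s, j ≠ i₀) (hlt : ∀ i ∈ s, i ≠ i₀ → c i < c i₀) : 0 < c i₀ := by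
  obtain ⟨j, hj, hji₀⟩ := hne
  have hlt_sum : ∑ i ∈ s, c i < ∑ _i ∈ s, c i₀ :=
    sum_lt_sum (fun i hi => (eq_or_ne i i₀).elim (fun h => h ▸ le_rfl) fun h => (hlt i hi h).le)
      ⟨j, hj, hlt j hj hji₀⟩
  rw [hsum, sum_const, nsmul_eq_mul] at hlt_sum
  exact pos_of_mul_pos_right hlt_sum (Nat.cast_nonneg _)

theorem sum_le_one_of_pairwise_eq_zero (ht : ∀ i ∈ s, t i ≤ 1)
    (hpair : (s : Set ι).Pairwise fun i j => t i = 0 ∨ t j = 0) : ∑ i ∈ s, t i ≤ 1 := by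
  by_cases h : ∃ j ∈ s, t j ≠ 0
  · obtain ⟨j, hj, htj⟩ := h
    rw [sum_eq_single_of_mem j hj fun i hi hij => (hpair hi hj hij).resolve_right htj]
    exact ht j hj
  · push Not at h
    rw [sum_eq_zero h]
    exact zero_le_one

theorem sum_mul_le_of_sum_le_one (hle : ∀ i ∈ s, c i ≤ c i₀) (hc : 0 ≤ c i₀)
    (ht : ∀ i ∈ s, 0 ≤ t i) (hsum : ∑ i ∈ s, t i ≤ 1) : ∑ i ∈ s, c i * t i ≤ c i₀ :=
  calc ∑ i ∈ s, c i * t i ≤ ∑ i ∈ s, c i₀ * t i :=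
        sum_le_sum fun i hi => mul_le_mul_of_nonneg_right (hle i hi) (ht i hi)
    _ = c i₀ * ∑ i ∈ s, t i := (mul_sum _ _ _).symm
    _ ≤ c i₀ := mul_le_of_le_one_right hc hsum

theorem sum_mul_eq_iff_of_sum_le_one (hi₀ : i₀ ∈ s) (hlt : ∀ i ∈ s, i ≠ i₀ → c i < c i₀)
    (hc : 0 < c i₀) (ht : ∀ i ∈ s, 0 ≤ t i) (hsum : ∑ i ∈ s, t i ≤ 1) :
    ∑ i ∈ s, c i * t i = c i₀ ↔ t i₀ = 1 := by
  constructor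
  · intro h
    have hterms : ∀ i ∈ s, 0 ≤ (c i₀ - c i) * t i := fun i hi => mul_nonneg
      (sub_nonneg.2 <| (eq_or_ne i i₀).elim (fun h => h ▸ le_rfl) fun h => (hlt i hi h).le)
      (ht i hi)
    have hgap : c i₀ * (1 - ∑ i ∈ s, t i) + ∑ i ∈ s, (c i₀ - c i) * t i = 0 := by
      simp only [sub_mul, sum_sub_distrib, ← mul_sum, h]
      ring
    have hmass : c i₀ * (1 - ∑ i ∈ s, t i) = 0 := by
      linarith [sum_nonneg hterms, mul_nonneg hc.le (sub_nonneg.2 hsum)]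
    have hone : ∑ i ∈ s, t i = 1 := by
      linarith [(mul_eq_zero.1 hmass).resolve_left hc.ne']
    have hoff : ∀ i ∈ s, i ≠ i₀ → t i = 0 := fun i hi hne =>
      (mul_eq_zero.1 ((sum_eq_zero_iff_of_nonneg hterms).1 (by linarith) i hi)).resolve_left
        (sub_ne_zero.2 (hlt i hi hne).ne')
    rwa [sum_eq_single_of_mem i₀ hi₀ hoff] at hone
  · intro h
    classical
    have hrest_nonneg : ∀ i ∈ s.erase i₀, 0 ≤ t i := fun i hi => ht i (mem_of_mem_erase hi)
    have hrest : ∑ i ∈ s.erase i₀, t i = 0 := by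
      linarith [add_sum_erase s t hi₀, sum_nonneg hrest_nonneg]
    have hoff : ∀ i ∈ s, i ≠ i₀ → c i * t i = 0 := fun i hi hne => by
      rw [(sum_eq_zero_iff_of_nonneg hrest_nonneg).1 hrest i (mem_erase.2 ⟨hne, hi⟩), mul_zero]
    rw [sum_eq_single_of_mem i₀ hi₀ hoff, h, mul_one]

end Finset

section Psi

variable {K : ℕ} {s r : ℝ} {z : Fin K → ℝ}

theorem Tgen_le_iff : Tgen s z ≤ r ↔ 0 ≤ r ∧ ∀ k, s - z k ≤ r := by
  simp [Tgen, fold_max_le]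

theorem Tgen_nonneg : 0 ≤ Tgen s z :=
  (le_fold_max 0).2 (Or.inl le_rfl)

theorem sub_le_Tgen (k : Fin K) : s - z k ≤ Tgen s z :=
  (le_fold_max _).2 (Or.inr ⟨k, mem_univ k, le_rfl⟩)

theorem psiLoss_nonneg : 0 ≤ psiLoss z :=
  sub_nonneg.2 <| Tgen_le_iff.2 ⟨Tgen_nonneg, fun k => (sub_le_sub_right zero_le_one _).trans
    (sub_le_Tgen k)⟩

theorem psiLoss_le_one : psiLoss z ≤ 1 := by
  have h : Tgen 1 z ≤ Tgen 0 z + 1 := Tgen_le_iff.2 ⟨by linarith [Tgen_nonneg (s := 0) (z := z)],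
    fun k => by linarith [sub_le_Tgen (s := 0) (z := z) k]⟩
  rw [psiLoss]
  linarith

theorem min_one_sub_le_psiLoss (k : Fin K) : min 1 (1 - z k) ≤ psiLoss z := by
  have h₁ : 1 - z k ≤ Tgen 1 z := sub_le_Tgen k
  have h₀ : Tgen 0 z ≤ max (Tgen 1 z - 1) 0 := Tgen_le_iff.2 ⟨le_max_right _ _, fun j => by
    linarith [sub_le_Tgen (s := 1) (z := z) j, le_max_left (Tgen 1 z - 1) 0]⟩
  rw [psiLoss]
  rcases le_total (Tgen 1 z - 1) 0 with h | h
  · rw [max_eq_right h] at h₀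
    exact min_le_of_right_le (by linarith)
  · rw [max_eq_left h] at h₀
    exact min_le_of_left_le (by linarith)

theorem psiLoss_eq_one_of_nonpos {k : Fin K} (hk : z k ≤ 0) : psiLoss z = 1 :=
  psiLoss_le_one.antisymm <| by
    simpa [min_eq_left (by linarith : (1 : ℝ) ≤ 1 - z k)] using min_one_sub_le_psiLoss (z := z) k

theorem psiLoss_eq_zero_iff : psiLoss z = 0 ↔ ∀ k, 1 ≤ z k := by
  refine ⟨fun h k => ?_, fun h => ?_⟩
  · by_contra hk
    have := min_one_sub_le_psiLoss (z := z) k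
    rw [h] at this
    exact (lt_min zero_lt_one (by linarith)).not_ge this
  · have h₁ : Tgen 1 z ≤ 0 := Tgen_le_iff.2 ⟨le_rfl, fun k => by linarith [h k]⟩
    have h₀ : Tgen 0 z ≤ 0 := Tgen_le_iff.2 ⟨le_rfl, fun k => by linarith [h k]⟩
    rw [psiLoss, h₁.antisymm Tgen_nonneg, h₀.antisymm Tgen_nonneg, sub_zero]

end Psi

section SignVecs

variable {K : ℕ}

theorem card_signVecs (K : ℕ) : (signVecs K).card = 2 ^ K := by
  classical
  rw [signVecs, card_image_of_injective, card_univ, Fintype.card_fun, Fintype.card_bool,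
    Fintype.card_fin]
  intro b b' h
  funext k
  have := congrFun h k
  beta_reduce at this
  revert this
  cases b k <;> cases b' k <;> norm_num

theorem mul_self_eq_one_of_mem_signVecs {a : Fin K → ℝ} (ha : a ∈ signVecs K) (k : Fin K) :
    a k * a k = 1 := by
  rcases (mem_signVecs a).1 ha k with h | h <;> simp [h]

theorem psiLoss_mul_eq_one_or_eq_one {a b : Fin K → ℝ} (ha : a ∈ signVecs K) (hb : b ∈ signVecs K)
    (hab : a ≠ b) (z : Fin K → ℝ) :
    psiLoss (fun k => a k * z k) = 1 ∨ psiLoss (fun k => b k * z k) = 1 := by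
  obtain ⟨k, hk⟩ := Function.ne_iff.1 hab
  have hba : b k = -a k := by
    rcases (mem_signVecs a).1 ha k with h | h <;> rcases (mem_signVecs b).1 hb k with h' | h' <;>
      simp_all
  rcases le_total (a k * z k) 0 with h | h
  · exact Or.inl (psiLoss_eq_one_of_nonpos h)
  · exact Or.inr (psiLoss_eq_one_of_nonpos (show b k * z k ≤ 0 by rw [hba]; linarith))

theorem sum_one_sub_psiLoss_le_one (z : Fin K → ℝ) :
    ∑ a ∈ signVecs K, (1 - psiLoss (fun k => a k * z k)) ≤ 1 :=
  sum_le_one_of_pairwise_eq_zero (fun _ _ => sub_le_self _ psiLoss_nonneg)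
    fun _ ha _ hb hab => (psiLoss_mul_eq_one_or_eq_one ha hb hab z).imp
      (fun h => by rw [h, sub_self]) fun h => by rw [h, sub_self]

theorem neg_le_sum_mul_psiLoss_and_eq_iff (hK : 1 ≤ K) {c : (Fin K → ℝ) → ℝ} {a₀ : Fin K → ℝ}
    (hsum : ∑ a ∈ signVecs K, c a = 0) (ha₀ : a₀ ∈ signVecs K)
    (hlt : ∀ a ∈ signVecs K, a ≠ a₀ → c a < c a₀) (z : Fin K → ℝ) :
    -c a₀ ≤ ∑ a ∈ signVecs K, c a * psiLoss (fun k => a k * z k) ∧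
      (∑ a ∈ signVecs K, c a * psiLoss (fun k => a k * z k) = -c a₀ ↔
        ∀ k, 1 ≤ a₀ k * z k) := by
  have hpos : 0 < c a₀ := pos_of_sum_eq_zero_of_forall_lt hsum
    (exists_mem_ne (by rw [card_signVecs]; exact Nat.one_lt_two_pow (by omega)) a₀) hlt
  have hψ : ∑ a ∈ signVecs K, c a * psiLoss (fun k => a k * z k)
      = -∑ a ∈ signVecs K, c a * (1 - psiLoss (fun k => a k * z k)) := by
    simp only [mul_sub, mul_one, sum_sub_distrib, hsum]
    ring
  have ht : ∀ a ∈ signVecs K, 0 ≤ 1 - psiLoss (fun k => a k * z k) :=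
    fun _ _ => sub_nonneg.2 psiLoss_le_one
  rw [hψ, neg_le_neg_iff, neg_inj, sum_mul_eq_iff_of_sum_le_one ha₀ hlt hpos ht
    (sum_one_sub_psiLoss_le_one z), sub_eq_self, psiLoss_eq_zero_iff]
  exact ⟨sum_mul_le_of_sum_le_one
    (fun a ha => (eq_or_ne a a₀).elim (fun h => h ▸ le_rfl) fun h => (hlt a ha h).le) hpos.le ht
    (sum_one_sub_psiLoss_le_one z), Iff.rfl⟩

end SignVecs

theorem Real.sign_eq_of_one_le_mul {a y : ℝ} (ha : a = 1 ∨ a = -1) (h : 1 ≤ a * y) :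
    Real.sign y = a := by
  rcases ha with rfl | rfl
  · exact Real.sign_of_pos (by linarith)
  · exact Real.sign_of_neg (by linarith)

namespace MeasureTheory

variable {X : Type*} [MeasurableSpace X] {μ : Measure X}

theorem integrable_comp_of_ae_mem {α : Type*} [MeasurableSpace α] [MeasurableSingletonClass α]
    {s : Finset α} {W : X → α → ℝ} (hW : ∀ a ∈ s, Integrable (fun x => W x a) μ) {a₀ : X → α}
    (ha₀ : Measurable a₀) (hs : ∀ᵐ x ∂μ, a₀ x ∈ s) : Integrable (fun x => W x (a₀ x)) μ := by
  classical
  refine (integrable_finsetSum s fun a ha =>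
    (hW a ha).indicator (ha₀ (measurableSet_singleton a))).congr ?_
  filter_upwards [hs] with x hx
  simp only [Set.indicator_apply, Set.mem_preimage, Set.mem_singleton_iff]
  rw [sum_ite_eq s (a₀ x) (fun a => W x a), if_pos hx]

theorem integral_eq_integral_iff_of_ae {f g : X → ℝ} {p : X → Prop} (hf : Integrable f μ)
    (hg : Integrable g μ) (hle : f ≤ᵐ[μ] g) (hiff : ∀ᵐ x ∂μ, g x = f x ↔ p x) :
    ∫ x, g x ∂μ = ∫ x, f x ∂μ ↔ ∀ᵐ x ∂μ, p x := by
  rw [eq_comm, integral_eq_iff_of_ae_le hf hg hle]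
  exact ⟨fun h => by filter_upwards [h, hiff] with x hx hpx using hpx.1 hx.symm,
    fun h => by filter_upwards [h, hiff] with x hx hpx using (hpx.2 hx).symm⟩

end MeasureTheory

open MeasureTheory in
theorem stmt17_general (K : ℕ) (hK : 1 ≤ K) {X : Type*} [MeasurableSpace X]
    (μ : Measure X) (W : X → (Fin K → ℝ) → ℝ)
    (hWint : ∀ a ∈ signVecs K, Integrable (fun x => W x a) μ)
    -- `Wbar x` is the average weight over the `2 ^ K` treatments
    (Wbar : X → ℝ) (hWbar : Wbar = fun x => (∑ a ∈ signVecs K, W x a) / 2 ^ K)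
    -- a.e., `a₀ x` is the unique maximizer of `a ↦ W x a`
    (a₀ : X → Fin K → ℝ) (ha₀ : Measurable a₀)
    (hmax : ∀ᵐ x ∂μ, a₀ x ∈ signVecs K
        ∧ ∀ a ∈ signVecs K, a ≠ a₀ x → W x a < W x (a₀ x)) :
    ∀ f : X → Fin K → ℝ, Measurable f →
      Integrable
        (fun x => ∑ a ∈ signVecs K, (W x a - Wbar x) * psiLoss (fun k => a k * f x k)) μ →
      -- the residual-weighted ψ-risk is bounded below by its Bayes value …
      ((∫ x, ((∑ a ∈ signVecs K, (W x a - Wbar x)) - (W x (a₀ x) - Wbar x)) ∂μ)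
          ≤ ∫ x, (∑ a ∈ signVecs K, (W x a - Wbar x) * psiLoss (fun k => a k * f x k)) ∂μ)
      ∧
      -- … with equality iff a.e. `a₀ x k * f x k ≥ 1` for all `k` …
      (((∫ x, (∑ a ∈ signVecs K, (W x a - Wbar x) * psiLoss (fun k => a k * f x k)) ∂μ)
            = ∫ x, ((∑ a ∈ signVecs K, (W x a - Wbar x)) - (W x (a₀ x) - Wbar x)) ∂μ)
          ↔ (∀ᵐ x ∂μ, ∀ k, 1 ≤ a₀ x k * f x k))
      ∧
      -- … and any minimizer `f` of the residual-weighted ψ-risk has `sign (f x) = a₀ x` a.e.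
      ((∀ g : X → Fin K → ℝ, Measurable g →
          Integrable
            (fun x => ∑ a ∈ signVecs K, (W x a - Wbar x) * psiLoss (fun k => a k * g x k)) μ →
          (∫ x, (∑ a ∈ signVecs K, (W x a - Wbar x) * psiLoss (fun k => a k * f x k)) ∂μ)
            ≤ ∫ x, (∑ a ∈ signVecs K, (W x a - Wbar x) * psiLoss (fun k => a k * g x k)) ∂μ) →
        ∀ᵐ x ∂μ, ∀ k, Real.sign (f x k) = a₀ x k) := by
  intro f _ hRf
  have hWbar_int : Integrable Wbar μ := hWbar ▸ (integrable_finsetSum _ hWint).div_const _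
  have hsum : ∀ x, ∑ a ∈ signVecs K, (W x a - Wbar x) = 0 := fun x => by
    rw [hWbar, sum_sub_distrib, sum_const, card_signVecs, nsmul_eq_mul, Nat.cast_pow,
      Nat.cast_ofNat, mul_div_cancel₀ _ (by positivity), sub_self]
  have hB : Integrable (fun x => (∑ a ∈ signVecs K, (W x a - Wbar x)) - (W x (a₀ x) - Wbar x)) μ :=
    (integrable_finsetSum _ fun a ha => (hWint a ha).sub hWbar_int).sub
      ((integrable_comp_of_ae_mem hWint ha₀ (hmax.mono fun _ hx => hx.1)).sub hWbar_int)
  have hpt : ∀ g : X → Fin K → ℝ, ∀ᵐ x ∂μ,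
      (∑ a ∈ signVecs K, (W x a - Wbar x)) - (W x (a₀ x) - Wbar x)
          ≤ ∑ a ∈ signVecs K, (W x a - Wbar x) * psiLoss (fun k => a k * g x k) ∧
        (∑ a ∈ signVecs K, (W x a - Wbar x) * psiLoss (fun k => a k * g x k)
            = (∑ a ∈ signVecs K, (W x a - Wbar x)) - (W x (a₀ x) - Wbar x) ↔
          ∀ k, 1 ≤ a₀ x k * g x k) := fun g => by
    filter_upwards [hmax] with x ⟨hx₀, hxlt⟩
    rw [hsum x, zero_sub]
    exact neg_le_sum_mul_psiLoss_and_eq_iff hK (hsum x) hx₀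
      (fun a ha hne => sub_lt_sub_right (hxlt a ha hne) _) (g x)
  have hrisk_eq_iff := fun g (hRg : Integrable _ μ) =>
    integral_eq_integral_iff_of_ae hB hRg ((hpt g).mono fun _ hx => hx.1)
      ((hpt g).mono fun _ hx => hx.2)
  have hbayes_le : _ ≤ _ := integral_mono_ae hB hRf ((hpt f).mono fun _ hx => hx.1)
  refine ⟨hbayes_le, hrisk_eq_iff f hRf, fun hmin => ?_⟩
  have ha₀_self : ∀ᵐ x ∂μ, ∀ k, 1 ≤ a₀ x k * a₀ x k :=
    hmax.mono fun _ hx k => (mul_self_eq_one_of_mem_signVecs hx.1 k).ge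
  have hRa₀ : Integrable _ μ :=
    hB.congr <| (ha₀_self.and (hpt a₀)).mono fun _ hx => (hx.2.2.2 hx.1).symm
  have hf_bayes := le_antisymm
    ((hmin a₀ ha₀ hRa₀).trans_eq (((hrisk_eq_iff a₀ hRa₀).2 ha₀_self))) hbayes_le
  filter_upwards [(hrisk_eq_iff f hRf).1 hf_bayes, hmax] with x hx hx₀ k
  exact Real.sign_eq_of_one_le_mul ((mem_signVecs _).1 hx₀.1 k) (hx k)

open MeasureTheory in
theorem stmt17 (K : ℕ) (hK : 1 ≤ K) {X : Type*} [MeasurableSpace X]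
    (μ : Measure X) (W : X → (Fin K → ℝ) → ℝ)
    (hWmeas : ∀ a ∈ signVecs K, Measurable fun x => W x a)
    (hWint : ∀ a ∈ signVecs K, Integrable (fun x => W x a) μ)
    -- `Wbar x` is the average weight over the `2 ^ K` treatments
    (Wbar : X → ℝ) (hWbar : Wbar = fun x => (∑ a ∈ signVecs K, W x a) / 2 ^ K)
    -- a.e., `a₀ x` is the unique maximizer of `a ↦ W x a`
    (a₀ : X → Fin K → ℝ) (ha₀ : Measurable a₀)
    (hmax : ∀ᵐ x ∂μ, a₀ x ∈ signVecs K
        ∧ ∀ a ∈ signVecs K, a ≠ a₀ x → W x a < W x (a₀ x)) :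
    ∀ f : X → Fin K → ℝ, Measurable f →
      Integrable
        (fun x => ∑ a ∈ signVecs K, (W x a - Wbar x) * psiLoss (fun k => a k * f x k)) μ →
      -- the residual-weighted ψ-risk is bounded below by its Bayes value …
      ((∫ x, ((∑ a ∈ signVecs K, (W x a - Wbar x)) - (W x (a₀ x) - Wbar x)) ∂μ)
          ≤ ∫ x, (∑ a ∈ signVecs K, (W x a - Wbar x) * psiLoss (fun k => a k * f x k)) ∂μ)
      ∧
      -- … with equality iff a.e. `a₀ x k * f x k ≥ 1` for all `k` …
      (((∫ x, (∑ a ∈ signVecs K, (W x a - Wbar x) * psiLoss (fun k => a k * f x k)) ∂μ)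
            = ∫ x, ((∑ a ∈ signVecs K, (W x a - Wbar x)) - (W x (a₀ x) - Wbar x)) ∂μ)
          ↔ (∀ᵐ x ∂μ, ∀ k, 1 ≤ a₀ x k * f x k))
      ∧
      -- … and any minimizer `f` of the residual-weighted ψ-risk has `sign (f x) = a₀ x` a.e.
      ((∀ g : X → Fin K → ℝ, Measurable g →
          Integrable
            (fun x => ∑ a ∈ signVecs K, (W x a - Wbar x) * psiLoss (fun k => a k * g x k)) μ →
          (∫ x, (∑ a ∈ signVecs K, (W x a - Wbar x) * psiLoss (fun k => a k * f x k)) ∂μ)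
            ≤ ∫ x, (∑ a ∈ signVecs K, (W x a - Wbar x) * psiLoss (fun k => a k * g x k)) ∂μ) →
        ∀ᵐ x ∂μ, ∀ k, Real.sign (f x k) = a₀ x k) :=
  stmt17_general K hK μ W hWint Wbar hWbar a₀ ha₀ hmax
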